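/- arXiv:1909.12370 — 5 statements merged into one kernel-verified Lean document; each statement's English description precedes it below -/
import Mathlib

section
/- Consider the region swap game with n = 5, k = 7, move vectors r1 = (1,1,0,1,1), r2 = (1,1,0,0,0), r3 = (1,0,1,1,0), r4 = (1,1,1,0,1), r5 = (0,0,1,1,0), r6 = (0,1,0,0,1), r7 = (0,0,1,1,1) in (ZMod 2)^5, and winning set W equal to the set of connected vectors of the twist-knot checkerboard multigraph. Then for every initial state V0 ∈ W, Player C moving first has a winning strategy. -/
/-- Winning positions for Player C in the region swap game with move vectors
`r : Fin k → Fin n → ZMod 2` and winning set `W`.  The first argument is the number of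
turns remaining, `used` is the set of indices already selected, the next argument is the
current state, and the `Bool` records whether it is Player C's turn to move
(`true` = C to move).  On each turn the player to move selects an unused index `i`
together with a value `ε : ZMod 2`, changing the state by `ε • r i`.  When no turns
remain, Player C has won exactly if the final state lies in `W`. -/
def CWins {k n : ℕ} (r : Fin k → Fin n → ZMod 2) (W : Set (Fin n → ZMod 2)) :
    ℕ → Finset (Fin k) → (Fin n → ZMod 2) → Bool → Prop
  | 0, _, v, _ => v ∈ W
  | m + 1, used, v, true => ∃ i : Fin k, i ∉ used ∧ ∃ ε : ZMod 2,
      CWins r W m (insert i used) (v + ε • r i) false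
  | m + 1, used, v, false => ∀ i : Fin k, i ∉ used → ∀ ε : ZMod 2,
      CWins r W m (insert i used) (v + ε • r i) true

/-- The endpoints of the five edges of the twist-knot checkerboard multigraph on the
vertex set `Fin 4`: `e1 = {1,2}`, `e2 = {1,3}`, `e3 = {2,4}`, `e4 = {2,4}`, `e5 = {3,4}`
(vertices renamed `0,1,2,3`). -/
def twistEnds : Fin 5 → Fin 4 × Fin 4 := ![(0, 1), (0, 2), (1, 3), (1, 3), (2, 3)]

/-- The simple graph on `Fin 4` whose edges are the pairs `twistEnds i` for the
indices `i` with `v i = 1`. -/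
def twistGraph (v : Fin 5 → ZMod 2) : SimpleGraph (Fin 4) :=
  SimpleGraph.fromRel fun x y => ∃ i : Fin 5, v i = 1 ∧ twistEnds i = (x, y)

/-- The set of connected vectors of the twist-knot checkerboard multigraph: the edges
`e_i` with `v i = 1` form a spanning tree, i.e. exactly three coordinates of `v` equal
`1`, not both `v 3 = 1` and `v 4 = 1` (the parallel edges, here indices `2` and `3`),
and the corresponding edges connect all four vertices. -/
def twistW : Set (Fin 5 → ZMod 2) :=
  {v | (Finset.univ.filter fun i => v i = 1).card = 3 ∧ ¬(v 2 = 1 ∧ v 3 = 1) ∧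
    (twistGraph v).Connected}

/-- The seven move vectors of the twist-knot game board. -/
def twistMoves : Fin 7 → Fin 5 → ZMod 2 :=
  ![![1, 1, 0, 1, 1], ![1, 1, 0, 0, 0], ![1, 0, 1, 1, 0], ![1, 1, 1, 0, 1],
    ![0, 0, 1, 1, 0], ![0, 1, 0, 0, 1], ![0, 0, 1, 1, 1]]

/-!
C opens with r₅ and afterwards answers every move of D with its partner in the pairing
r₁ ↔ r₄, r₂ ↔ r₆, r₃ ↔ r₇. The differences of paired moves lie in
H = ⟨(0,0,1,1,0), (1,0,0,0,1)⟩, and W contains the whole coset (1,1,1,0,0) + H: these are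
the four spanning trees containing e₂ and one of the parallel edges e₃, e₄. Since the
move vectors span the space, fix c with V₀ + ∑ cᵢ rᵢ = (1,1,1,0,0). If C plays r₅ with
coefficient c₅ and answers D's (i, ε) by (σ i, c_i + c_{σ i} - ε), the quantity
"state + ∑ over unused j of c_j r_j" moves only by (ε - c_i)(r_i - r_{σ i}) ∈ H, so the
final state lies in (1,1,1,0,0) + H ⊆ W.
-/

section Pairing

variable {k n : ℕ} {r : Fin k → Fin n → ZMod 2} {W : Set (Fin n → ZMod 2)}
  {H : Submodule (ZMod 2) (Fin n → ZMod 2)} {σ : Fin k → Fin k}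

theorem cWins_false_of_pairing (hσ : Function.Involutive σ) (hpair : ∀ i, r i - r (σ i) ∈ H)
    (c : Fin k → ZMod 2) (j : ℕ) (used : Finset (Fin k)) (v : Fin n → ZMod 2)
    (hcard : usedᶜ.card = 2 * j) (hclosed : ∀ i ∉ used, σ i ≠ i ∧ σ i ∉ used)
    (hW : ∀ h ∈ H, v + ∑ i ∈ usedᶜ, c i • r i + h ∈ W) :
    CWins r W (2 * j) used v false := by
  induction j generalizing used v with
  | zero =>
    rw [Finset.card_eq_zero.mp hcard] at hW
    simpa [CWins] using hW 0 H.zero_mem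
  | succ j ih =>
    intro i hi ε
    obtain ⟨hσne, hσi⟩ := hclosed i hi
    refine ⟨σ i, by simp [hσne, hσi], c i + c (σ i) - ε, ih _ _ ?_ ?_ fun h hh => ?_⟩
    · rw [Finset.compl_insert, Finset.card_erase_of_mem (by simp [hσne, hσi]),
        Finset.compl_insert, Finset.card_erase_of_mem (by simpa using hi), hcard]
      omega
    · intro i' hi'
      simp only [Finset.mem_insert, not_or] at hi'
      obtain ⟨hi'σ, hi'i, hi'used⟩ := hi'
      obtain ⟨hne, hnot⟩ := hclosed i' hi'used
      refine ⟨hne, ?_⟩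
      simp only [Finset.mem_insert, not_or]
      exact ⟨fun e => hi'i (hσ.injective e), fun e => hi'σ (by rw [← e, hσ]), hnot⟩
    · have key : v + ε • r i + (c i + c (σ i) - ε) • r (σ i) +
          ∑ x ∈ (insert (σ i) (insert i used))ᶜ, c x • r x =
          v + ∑ x ∈ usedᶜ, c x • r x + (ε - c i) • (r i - r (σ i)) := by
        rw [← Finset.add_sum_erase _ _ (Finset.mem_compl.mpr hi),
          ← Finset.add_sum_erase _ _ (show σ i ∈ usedᶜ.erase i by simp [hσne, hσi]),
          Finset.compl_insert, Finset.compl_insert]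
        module
      rw [key, add_assoc]
      exact hW _ (H.add_mem (H.smul_mem _ (hpair i)) hh)

theorem cWins_true_of_pairing (hσ : Function.Involutive σ) (hpair : ∀ i, r i - r (σ i) ∈ H)
    (c : Fin k → ZMod 2) (j : ℕ) (used : Finset (Fin k)) (v : Fin n → ZMod 2) {i₀ : Fin k}
    (hi₀ : i₀ ∉ used) (hσi₀ : σ i₀ = i₀) (hcard : usedᶜ.card = 2 * j + 1)
    (hclosed : ∀ i ∉ used, i ≠ i₀ → σ i ≠ i ∧ σ i ∉ used)
    (hW : ∀ h ∈ H, v + ∑ i ∈ usedᶜ, c i • r i + h ∈ W) :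
    CWins r W (2 * j + 1) used v true := by
  refine ⟨i₀, hi₀, c i₀, cWins_false_of_pairing hσ hpair c j _ _ ?_ ?_ fun h hh => ?_⟩
  · rw [Finset.compl_insert, Finset.card_erase_of_mem (by simpa using hi₀), hcard]
    omega
  · intro i hi
    simp only [Finset.mem_insert, not_or] at hi ⊢
    obtain ⟨hne, hnot⟩ := hclosed i hi.2 hi.1
    exact ⟨hne, fun e => hi.1 (by rw [← hσ i, e, hσi₀]), hnot⟩
  · rw [Finset.compl_insert, add_assoc v,
      Finset.add_sum_erase _ (fun i => c i • r i) (Finset.mem_compl.mpr hi₀)]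
    exact hW h hh

end Pairing

instance (v : Fin 5 → ZMod 2) : DecidableRel (twistGraph v).Adj :=
  fun x y => decidable_of_iff _ (SimpleGraph.fromRel_adj _ x y).symm

instance : DecidablePred (· ∈ twistW) := fun v =>
  inferInstanceAs (Decidable ((Finset.univ.filter fun i => v i = 1).card = 3 ∧
    ¬(v 2 = 1 ∧ v 3 = 1) ∧ (twistGraph v).Connected))

-- 0-based: r₁ ↔ r₄, r₂ ↔ r₆, r₃ ↔ r₇, and r₅ is fixed.
def twistPairing : Fin 7 → Fin 7 := ![3, 5, 6, 0, 4, 1, 2]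

def twistH : Submodule (ZMod 2) (Fin 5 → ZMod 2) :=
  Submodule.span (ZMod 2) {![0, 0, 1, 1, 0], ![1, 0, 0, 0, 1]}

def twistTarget : Fin 5 → ZMod 2 := ![1, 1, 1, 0, 0]

theorem twistPairing_involutive : Function.Involutive twistPairing := by
  unfold Function.Involutive; decide

theorem twistMoves_sub_twistPairing_mem (i : Fin 7) :
    twistMoves i - twistMoves (twistPairing i) ∈ twistH :=
  Submodule.mem_span_pair.mpr (by revert i; decide)

theorem twistTarget_add_mem {h : Fin 5 → ZMod 2} (hh : h ∈ twistH) :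
    twistTarget + h ∈ twistW := by
  obtain ⟨a, b, rfl⟩ := Submodule.mem_span_pair.mp hh
  clear hh
  revert a b
  decide

theorem exists_sum_smul_twistMoves_eq (v : Fin 5 → ZMod 2) :
    ∃ c : Fin 7 → ZMod 2, ∑ i, c i • twistMoves i = v := by
  revert v; decide

/-- On the twist-knot game board, for every connected initial state, Player C moving
first has a winning strategy in the region swap game. -/
theorem stmt_0 : ∀ V0 ∈ twistW, CWins twistMoves twistW 7 ∅ V0 true := by
  intro V0 _
  obtain ⟨c, hc⟩ := exists_sum_smul_twistMoves_eq (twistTarget - V0)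
  refine cWins_true_of_pairing twistPairing_involutive twistMoves_sub_twistPairing_mem c 3 ∅ V0
    (i₀ := 4) (Finset.notMem_empty _) rfl rfl (by decide) fun h hh => ?_
  rw [Finset.compl_empty, hc, add_sub_cancel]
  exact twistTarget_add_mem hh
end

section
/- Consider the region swap game with n = 3, k = 5, move vectors s1 = (1,1,0), s2 = (1,0,1), s3 = (0,1,1), f1 = (1,1,1), f2 = (1,1,1) in (ZMod 2)^3, and winning set W = {v ∈ (ZMod 2)^3 : exactly two coordinates of v equal 1}. Then for every initial state V0 ∈ W, Player C moving first has a winning strategy. -/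
/-- The five region move vectors of the trefoil game board: the three vertex-star
vectors `s1, s2, s3` and the two face vectors `f1 = f2 = (1,1,1)`. -/
def trefoilMoves : Fin 5 → Fin 3 → ZMod 2 :=
  ![![1, 1, 0], ![1, 0, 1], ![0, 1, 1], ![1, 1, 1], ![1, 1, 1]]

/-- Connected states for the trefoil board: exactly two coordinates equal `1`. -/
def trefoilW : Set (Fin 3 → ZMod 2) :=
  {v | (Finset.univ.filter fun i => v i = 1).card = 2}

/-!
C opens with the star `s₁` and `ε = 0`, leaving the state in `W`. The remaining moves split
into the pairs `{s₂, s₃}` and `{f₁, f₂}`, and C answers each move of D with its partner.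
Answering `f` with the same `ε` cancels D's move. The winning set `W` consists of the
nonzero vectors with even coordinate sum, and the stars have even coordinate sum, so after D
adds a multiple of one of `s₂, s₃` to a state in `W` the state is still even, and adding the
other star or not makes it nonzero.
-/

theorem add_smul_add_smul_self {M : Type*} [AddCommGroup M] [Module (ZMod 2) M]
    (v w : M) (ε : ZMod 2) : v + ε • w + ε • w = v := by
  rw [add_assoc, ← add_smul, CharTwo.add_self_eq_zero, zero_smul, add_zero]

theorem exists_add_smul_add_smul_mem_of_eq {M : Type*} [AddCommGroup M] [Module (ZMod 2) M]
    {W : Set M} {v a b : M} (hab : a = b) (hv : v ∈ W) (ε : ZMod 2) :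
    ∃ ε' : ZMod 2, v + ε • a + ε' • b ∈ W :=
  ⟨ε, by rwa [← hab, add_smul_add_smul_self]⟩

namespace CWins

variable {k n : ℕ} {r : Fin k → Fin n → ZMod 2} {W : Set (Fin n → ZMod 2)}

theorem of_pairing (σ : Fin k → Fin k) (hσ : Function.Involutive σ)
    (hresp : ∀ i, σ i ≠ i → ∀ v ∈ W, ∀ ε : ZMod 2, ∃ ε' : ZMod 2,
      v + ε • r i + ε' • r (σ i) ∈ W) :
    ∀ (m : ℕ) (used : Finset (Fin k)) (v : Fin n → ZMod 2),
      (∀ i ∉ used, σ i ≠ i ∧ σ i ∉ used) → v ∈ W → CWins r W (2 * m) used v false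
  | 0, _, _, _, hv => hv
  | m + 1, used, v, hused, hv => by
    intro i hi ε
    obtain ⟨hσi, hσi_used⟩ := hused i hi
    obtain ⟨ε', hε'⟩ := hresp i hσi v hv ε
    refine ⟨σ i, by simp [hσi, hσi_used], ε', of_pairing σ hσ hresp m _ _ ?_ hε'⟩
    intro j hj
    simp only [Finset.mem_insert, not_or] at hj ⊢
    obtain ⟨hjσi, hji, hj_used⟩ := hj
    refine ⟨(hused j hj_used).1, fun h => hji (hσ.injective h), fun h => hjσi ?_,
      (hused j hj_used).2⟩
    rw [← h, hσ]

end CWins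

theorem mem_trefoilW_iff (v : Fin 3 → ZMod 2) :
    v ∈ trefoilW ↔ v ≠ 0 ∧ v 0 + v 1 + v 2 = 0 := by
  revert v
  simp only [trefoilW, Set.mem_ofPred_eq]
  decide

theorem trefoilMoves_mem_trefoilW {j : Fin 5} (hj : j.val < 3) : trefoilMoves j ∈ trefoilW := by
  revert j
  simp only [trefoilW, Set.mem_ofPred_eq]
  decide

theorem add_smul_trefoilMoves_sum_eq_zero {v : Fin 3 → ZMod 2} (hv : v 0 + v 1 + v 2 = 0)
    {j : Fin 5} (hj : j.val < 3) (ε : ZMod 2) :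
    (v + ε • trefoilMoves j) 0 + (v + ε • trefoilMoves j) 1 + (v + ε • trefoilMoves j) 2 =
      0 := by
  have hstar : trefoilMoves j 0 + trefoilMoves j 1 + trefoilMoves j 2 = 0 := by
    revert j; decide
  simp only [Pi.add_apply, Pi.smul_apply, smul_eq_mul]
  linear_combination hv + ε * hstar

theorem exists_add_smul_trefoilMoves_mem {v : Fin 3 → ZMod 2} (hv : v 0 + v 1 + v 2 = 0)
    {j : Fin 5} (hj : j.val < 3) : ∃ ε : ZMod 2, v + ε • trefoilMoves j ∈ trefoilW := by
  by_cases hv0 : v = 0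
  · exact ⟨1, by simpa [hv0] using trefoilMoves_mem_trefoilW hj⟩
  · exact ⟨0, by simpa [mem_trefoilW_iff] using And.intro hv0 hv⟩

def trefoilPartner : Fin 5 → Fin 5 := ![0, 2, 1, 4, 3]

theorem trefoilPartner_involutive : Function.Involutive trefoilPartner := by
  intro i
  fin_cases i <;> rfl

theorem exists_add_smul_trefoilPartner_mem {i : Fin 5} (hi : trefoilPartner i ≠ i)
    {v : Fin 3 → ZMod 2} (hv : v ∈ trefoilW) (ε : ZMod 2) :
    ∃ ε' : ZMod 2,
      v + ε • trefoilMoves i + ε' • trefoilMoves (trefoilPartner i) ∈ trefoilW := by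
  have hv_sum := ((mem_trefoilW_iff v).1 hv).2
  fin_cases i
  · exact absurd rfl hi
  · exact exists_add_smul_trefoilMoves_mem
      (add_smul_trefoilMoves_sum_eq_zero hv_sum (j := 1) (by decide) ε) (j := 2) (by decide)
  · exact exists_add_smul_trefoilMoves_mem
      (add_smul_trefoilMoves_sum_eq_zero hv_sum (j := 2) (by decide) ε) (j := 1) (by decide)
  · exact exists_add_smul_add_smul_mem_of_eq rfl hv ε
  · exact exists_add_smul_add_smul_mem_of_eq rfl hv ε

/-- On the trefoil game board, for every connected initial state, Player C moving first
has a winning strategy in the region swap game. -/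
theorem stmt_4 : ∀ V0 ∈ trefoilW, CWins trefoilMoves trefoilW 5 ∅ V0 true := by
  intro V0 hV0
  refine ⟨0, Finset.notMem_empty 0, 0, ?_⟩
  rw [zero_smul, add_zero, Finset.insert_empty]
  exact CWins.of_pairing trefoilPartner trefoilPartner_involutive
    (fun _ hi _ hv ε => exists_add_smul_trefoilPartner_mem hi hv ε) 2 {0} V0 (by decide) hV0
end

section
/- Consider the region swap game with n = 10, k = 8, move vectors r1 = (1,1,1,0,0,0,1,0,1,0), r2 = (0,1,1,0,0,1,0,1,1,0), r3 = (0,0,0,1,1,0,1,1,0,1), r4 = (1,0,0,1,1,1,0,0,0,1), r5 = (0,0,1,0,0,1,0,1,1,1), r6 = (1,0,0,1,1,0,1,0,0,1), r7 = (1,1,0,1,1,1,0,0,0,0), r8 = (0,1,1,0,0,0,1,1,1,0) in (ZMod 2)^{10}, and winning set W = {V0¹, V0², V0³, V0⁴} where V0¹ = (0,1,0,0,1,1,0,0,1,1), V0² = (1,0,1,1,0,0,1,1,0,0), V0³ = (0,1,0,0,1,0,1,0,1,1), V0⁴ = (1,0,1,1,0,1,0,1,0,0). Then for every k ∈ {1,2,3,4},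 taking the initial state V0 = V0ᵏ, Player C moving second has a winning strategy. -/
def kleinMoves : Fin 8 → Fin 10 → ZMod 2 :=
  ![![1, 1, 1, 0, 0, 0, 1, 0, 1, 0], ![0, 1, 1, 0, 0, 1, 0, 1, 1, 0],
    ![0, 0, 0, 1, 1, 0, 1, 1, 0, 1], ![1, 0, 0, 1, 1, 1, 0, 0, 0, 1],
    ![0, 0, 1, 0, 0, 1, 0, 1, 1, 1], ![1, 0, 0, 1, 1, 0, 1, 0, 0, 1],
    ![1, 1, 0, 1, 1, 1, 0, 0, 0, 0], ![0, 1, 1, 0, 0, 0, 1, 1, 1, 0]]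

def kleinW : Set (Fin 10 → ZMod 2) :=
  {![0, 1, 0, 0, 1, 1, 0, 0, 1, 1], ![1, 0, 1, 1, 0, 0, 1, 1, 0, 0],
    ![0, 1, 0, 0, 1, 0, 1, 0, 1, 1], ![1, 0, 1, 1, 0, 1, 0, 1, 0, 0]}

section PairingStrategy

variable {k n : ℕ} {r : Fin k → Fin n → ZMod 2} {W : Set (Fin n → ZMod 2)} {σ : Fin k → Fin k}

theorem CWins.of_pairing_s12 (hσ : Function.Involutive σ) (hfix : ∀ i, σ i ≠ i)
    (hW : ∀ v ∈ W, ∀ i, ∀ ε : ZMod 2, v + ε • r i + ε • r (σ i) ∈ W) (m : ℕ) :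
    ∀ used : Finset (Fin k), (∀ i ∈ used, σ i ∈ used) →
      ∀ v ∈ W, CWins r W (2 * m) used v false := by
  induction m with
  | zero => exact fun _ _ _ hv => hv
  | succ m ih =>
    intro used hused v hv i hi ε
    refine ⟨σ i, ?_, ε, ?_⟩
    · simp only [Finset.mem_insert, not_or]
      exact ⟨hfix i, fun h => hi (hσ i ▸ hused _ h)⟩
    · refine ih _ ?_ _ (hW v hv i ε)
      intro j hj
      simp only [Finset.mem_insert] at hj ⊢
      rcases hj with rfl | rfl | hj
      · exact Or.inr (Or.inl (hσ i))
      · exact Or.inl rfl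
      · exact Or.inr (Or.inr (hused _ hj))

end PairingStrategy

def kleinPairing : Fin 8 → Fin 8 := ![2, 3, 0, 1, 6, 7, 4, 5]

def kleinShift : Fin 10 → ZMod 2 := ![1, 1, 1, 1, 1, 0, 0, 1, 1, 1]

theorem kleinPairing_involutive : Function.Involutive kleinPairing :=
  show ∀ i, kleinPairing (kleinPairing i) = i by decide

theorem kleinPairing_ne : ∀ i, kleinPairing i ≠ i := by decide

theorem kleinMoves_add_kleinMoves_kleinPairing :
    ∀ i, kleinMoves i + kleinMoves (kleinPairing i) = kleinShift := by decide

theorem add_kleinShift_mem_kleinW {v : Fin 10 → ZMod 2} (hv : v ∈ kleinW) :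
    v + kleinShift ∈ kleinW := by
  simp only [kleinW, Set.mem_insert_iff, Set.mem_singleton_iff] at hv ⊢
  rcases hv with rfl | rfl | rfl | rfl <;> decide

theorem add_smul_kleinMoves_pair_mem_kleinW {v : Fin 10 → ZMod 2} (hv : v ∈ kleinW)
    (i : Fin 8) (ε : ZMod 2) :
    v + ε • kleinMoves i + ε • kleinMoves (kleinPairing i) ∈ kleinW := by
  rw [add_assoc, ← smul_add, kleinMoves_add_kleinMoves_kleinPairing]
  obtain rfl | rfl : ε = 0 ∨ ε = 1 := by revert ε; decide
  · simpa using hv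
  · simpa using add_kleinShift_mem_kleinW hv

/-- On the game board on the connect sum of two Klein bottles, for each initial state
`V0 = V0ᵏ` (`k ∈ {1,2,3,4}`), Player C moving second has a winning strategy in the
region swap game. -/
theorem stmt_12 : ∀ V0 ∈ kleinW, CWins kleinMoves kleinW 8 ∅ V0 false :=
  CWins.of_pairing_s12 kleinPairing_involutive kleinPairing_ne
    (fun _ hv => add_smul_kleinMoves_pair_mem_kleinW hv) 4 ∅ (by simp)
end

section
/- Let G be a finite simple graph with at least one vertex. If, in the link smoothing game on G, the connecting player moving second has a winning strategy, then the number of edges of G is even. -/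
/-- Winning positions for the connecting player in the link smoothing game on a finite
simple graph `G`.  The first argument is the number of turns remaining, `used` is the
set of edges already selected, `f` records the values assigned so far (edges not yet
selected hold a junk value), and the `Bool` records whether it is the connecting
player's turn to move (`true` = connecting player to move).  On each turn the player to
move selects an unselected edge of `G` and assigns it a value in `ZMod 2`.  When no
turns remain, the connecting player has won exactly if the set of edges of `G` assigned
the value `1` is the edge set of a spanning tree of `G`. -/
def ConnWins {V : Type} [DecidableEq V] (G : SimpleGraph V) :
    ℕ → Finset (Sym2 V) → (Sym2 V → ZMod 2) → Bool → Prop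
  | 0, _, f, _ => ∃ T : SimpleGraph V, T.IsTree ∧ T.edgeSet = {e ∈ G.edgeSet | f e = 1}
  | m + 1, used, f, true => ∃ e ∈ G.edgeSet, e ∉ used ∧ ∃ ε : ZMod 2,
      ConnWins G m (insert e used) (Function.update f e ε) false
  | m + 1, used, f, false => ∀ e ∈ G.edgeSet, e ∉ used → ∀ ε : ZMod 2,
      ConnWins G m (insert e used) (Function.update f e ε) true

lemma tree_ncard {V : Type} [Fintype V] [DecidableEq V] (T : SimpleGraph V)
    (h : T.IsTree) : T.edgeSet.ncard + 1 = Fintype.card V := by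
  classical
  haveI : Fintype T.edgeSet := Fintype.ofFinite _
  rw [Set.ncard_eq_toFinset_card']
  exact h.card_edgeFinset

lemma tree_contra {V : Type} [Fintype V] [DecidableEq V] (G : SimpleGraph V)
    (f : Sym2 V → ZMod 2) (e : Sym2 V) (he : e ∈ G.edgeSet)
    (h0 : ∃ T : SimpleGraph V, T.IsTree ∧
      T.edgeSet = {e' ∈ G.edgeSet | Function.update f e 0 e' = 1})
    (h1 : ∃ T : SimpleGraph V, T.IsTree ∧
      T.edgeSet = {e' ∈ G.edgeSet | Function.update f e 1 e' = 1}) : False := by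
  obtain ⟨T0, ht0, hs0⟩ := h0
  obtain ⟨T1, ht1, hs1⟩ := h1
  have hne : e ∉ T0.edgeSet := by
    rw [hs0]
    intro hmem
    have := hmem.2
    rw [Function.update_self] at this
    exact absurd this (by decide)
  have heq : T1.edgeSet = insert e T0.edgeSet := by
    rw [hs0, hs1]
    ext e'
    by_cases h : e' = e
    · subst h
      simp [he]
    · simp [Function.update_of_ne h, h]
  have hcard : T1.edgeSet.ncard = T0.edgeSet.ncard + 1 := by
    rw [heq, Set.ncard_insert_of_notMem hne (Set.toFinite _)]
  have c0 := tree_ncard T0 ht0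
  have c1 := tree_ncard T1 ht1
  omega

lemma exists_unused {V : Type} [Fintype V] [DecidableEq V] (G : SimpleGraph V)
    (used : Finset (Sym2 V)) (hsub : ↑used ⊆ G.edgeSet)
    (hlt : used.card < G.edgeSet.ncard) : ∃ e ∈ G.edgeSet, e ∉ used := by
  by_contra hc
  push_neg at hc
  have hEq : G.edgeSet = ↑used := by
    apply Set.Subset.antisymm _ hsub
    intro e hemem
    exact hc e hemem
  rw [hEq, Set.ncard_coe_finset] at hlt
  omega

lemma no_odd_win {V : Type} [Fintype V] [DecidableEq V] (G : SimpleGraph V) :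
    ∀ (j : ℕ) (used : Finset (Sym2 V)) (f : Sym2 V → ZMod 2),
      ↑used ⊆ G.edgeSet → used.card + (2 * j + 1) = G.edgeSet.ncard →
      ¬ ConnWins G (2 * j + 1) used f false := by
  intro j
  induction j with
  | zero =>
    intro used f hsub hcard hw
    obtain ⟨e, he, hne⟩ := exists_unused G used hsub (by omega)
    have h0 := hw e he hne 0
    have h1 := hw e he hne 1
    exact tree_contra G f e he h0 h1
  | succ k ih =>
    intro used f hsub hcard hw
    obtain ⟨e, he, hne⟩ := exists_unused G used hsub (by omega)
    have hw2 : ConnWins G (2 * k + 1 + 1 + 1) used f false := by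
      have heq : 2 * (k + 1) + 1 = 2 * k + 1 + 1 + 1 := by omega
      rwa [heq] at hw
    have h1 : ConnWins G (2 * k + 1 + 1) (insert e used) (Function.update f e 0) true :=
      hw2 e he hne 0
    obtain ⟨e', he', hne', ε, hw'⟩ := h1
    have hsub' : ↑(insert e' (insert e used)) ⊆ G.edgeSet := by
      intro x hx
      simp only [Finset.coe_insert, Set.mem_insert_iff] at hx
      rcases hx with rfl | rfl | hx
      · exact he'
      · exact he
      · exact hsub hx
    have hcard' : (insert e' (insert e used)).card + (2 * k + 1) = G.edgeSet.ncard := by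
      rw [Finset.card_insert_of_notMem hne', Finset.card_insert_of_notMem hne]
      omega
    exact ih _ _ hsub' hcard' hw'

/-- If, in the link smoothing game on a finite simple graph `G` with at least one
vertex, the connecting player moving second has a winning strategy, then the number of
edges of `G` is even. -/
theorem stmt_13 {V : Type} [Fintype V] [DecidableEq V] [Nonempty V] (G : SimpleGraph V)
    (h : ConnWins G G.edgeSet.ncard ∅ (fun _ => 0) false) :
    Even G.edgeSet.ncard := by
  by_contra hodd
  rw [Nat.not_even_iff_odd] at hodd
  obtain ⟨j, hj⟩ := hodd
  apply no_odd_win G j ∅ (fun _ => 0) (by simp) (by simp [hj])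
  rw [← hj]
  exact h
end

section
/- Let G be a finite connected simple graph. If, in the link smoothing game on G, the connecting player moving second has a winning strategy, then G contains two edge-disjoint spanning trees, i.e., there exist spanning trees T1 and T2 of G whose edge sets are disjoint. -/
private lemma zmod2_sub {v : ZMod 2} (h : v + 1 = 1) : v = 0 := by revert h; revert v; decide

/-- The key "strategy pairing" lemma.  We run the connecting player's strategy against
itself in two parallel games (a real game and a shadow game) whose used sets differ by
a single special edge `es`, such that at the end the `1`-edges of the two games are
disjoint; each game produces a spanning tree. -/
private lemma connwins_key {V : Type} [Fintype V] [DecidableEq V] (G : SimpleGraph V)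
    (F : Finset (Sym2 V)) (hF : ∀ e, e ∈ F ↔ e ∈ G.edgeSet) :
    ∀ (k : ℕ) (usedS : Finset (Sym2 V)) (f g : Sym2 V → ZMod 2) (es : Sym2 V),
      usedS ⊆ F → es ∈ F → es ∉ usedS →
      (insert es usedS).card + k = F.card →
      f es = 0 →
      (∀ e ∈ usedS, g e = 1 → f e = 0) →
      ConnWins G k (insert es usedS) f true →
      ConnWins G (k+1) usedS g false →
      ∃ f' g' : Sym2 V → ZMod 2,
        (∀ e ∈ G.edgeSet, g' e = 1 → f' e = 0) ∧
        (∃ T1 : SimpleGraph V, T1.IsTree ∧ T1.edgeSet = {e ∈ G.edgeSet | f' e = 1}) ∧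
        (∃ T2 : SimpleGraph V, T2.IsTree ∧ T2.edgeSet = {e ∈ G.edgeSet | g' e = 1}) := by
  intro k
  induction k using Nat.strong_induction_on with
  | _ k ih =>
  intro usedS f g es hsub hesF hes hcard hfes hinv hreal hshadow
  rcases k with _ | _ | k
  · -- k = 0 : real game over; shadow game has one move left, forced to be `es`.
    simp only [ConnWins] at hreal hshadow
    obtain ⟨T1, hT1, hE1⟩ := hreal
    have hshadow0 := hshadow es ((hF es).mp hesF) hes 0
    try simp only [ConnWins] at hshadow0
    obtain ⟨T2, hT2, hE2⟩ := hshadow0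
    have hcov : insert es usedS = F :=
      Finset.eq_of_subset_of_card_le (Finset.insert_subset hesF hsub)
        (le_of_eq (by omega))
    refine ⟨f, Function.update g es 0, ?_, ⟨T1, hT1, hE1⟩, ⟨T2, hT2, hE2⟩⟩
    intro e heG hge
    have heF : e ∈ insert es usedS := hcov ▸ ((hF e).mpr heG)
    rcases Finset.mem_insert.mp heF with rfl | hmem
    · exact hfes
    · have hne : e ≠ es := fun hcon => hes (hcon ▸ hmem)
      rw [Function.update_of_ne hne] at hge
      exact hinv e hmem hge
  · -- k = 1 : real connector moves (a, v); shadow connector is then forced to play es.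
    simp only [ConnWins] at hreal hshadow
    obtain ⟨a, haG, ha, v, hreal0⟩ := hreal
    try simp only [ConnWins] at hreal0
    obtain ⟨T1, hT1, hE1⟩ := hreal0
    rw [Finset.mem_insert] at ha; push_neg at ha
    obtain ⟨hae, haS⟩ := ha
    have hshadow1 := hshadow a haG haS (v + 1)
    try simp only [ConnWins] at hshadow1
    obtain ⟨b, hbG, hb, w, hsh0⟩ := hshadow1
    try simp only [ConnWins] at hsh0
    obtain ⟨T2, hT2, hE2⟩ := hsh0
    rw [Finset.mem_insert] at hb; push_neg at hb
    obtain ⟨hba, hbS⟩ := hb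
    have hcov : insert a (insert es usedS) = F := by
      refine Finset.eq_of_subset_of_card_le
        (Finset.insert_subset ((hF a).mpr haG) (Finset.insert_subset hesF hsub))
        (le_of_eq ?_)
      rw [Finset.card_insert_of_notMem (by
        rw [Finset.mem_insert]; push_neg; exact ⟨hae, haS⟩)]
      omega
    have hbes : b = es := by
      have hbF : b ∈ insert a (insert es usedS) := hcov ▸ ((hF b).mpr hbG)
      rcases Finset.mem_insert.mp hbF with hcon | hbF
      · exact absurd hcon hba
      rcases Finset.mem_insert.mp hbF with h | hcon
      · exact h
      · exact absurd hcon hbS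
    subst hbes
    refine ⟨Function.update f a v,
      Function.update (Function.update g a (v + 1)) b w, ?_, ⟨T1, hT1, hE1⟩,
      ⟨T2, hT2, hE2⟩⟩
    intro e heG hge
    have heF : e ∈ insert a (insert b usedS) := hcov ▸ ((hF e).mpr heG)
    rcases Finset.mem_insert.mp heF with rfl | heF
    · -- e = a
      rw [Function.update_of_ne hae, Function.update_self] at hge
      rw [Function.update_self]
      exact zmod2_sub hge
    rcases Finset.mem_insert.mp heF with rfl | heF
    · -- e = b = es
      rw [Function.update_of_ne (fun hcon => hae hcon.symm)]
      exact hfes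
    · -- e ∈ usedS
      have hneb : e ≠ b := fun hcon => hes (hcon ▸ heF)
      have hnea : e ≠ a := fun hcon => haS (hcon ▸ heF)
      rw [Function.update_of_ne hneb, Function.update_of_ne hnea] at hge
      rw [Function.update_of_ne hnea]
      exact hinv e heF hge
  · -- k + 2 : a full round of play.
    simp only [ConnWins] at hreal hshadow
    obtain ⟨a, haG, ha, v, h1⟩ := hreal
    rw [Finset.mem_insert] at ha; push_neg at ha
    obtain ⟨hae, haS⟩ := ha
    have hshadow1 := hshadow a haG haS (v + 1)
    try simp only [ConnWins] at hshadow1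
    obtain ⟨b, hbG, hb, w, h3⟩ := hshadow1
    rw [Finset.mem_insert] at hb; push_neg at hb
    obtain ⟨hba, hbS⟩ := hb
    have hcardS : usedS.card + 1 + (k + 2) = F.card := by
      rw [Finset.card_insert_of_notMem hes] at hcard; omega
    try simp only [ConnWins] at h1
    by_cases hbes : b = es
    · -- the shadow strategy picked the special edge; the real disconnector plays a
      -- fresh edge, which becomes the new special edge.
      subst hbes
      have hfresh : ¬ (F ⊆ insert a (insert b usedS)) := by
        intro hcon
        have hc1 := Finset.card_le_card hcon
        have hc2 : (insert a (insert b usedS)).card ≤ usedS.card + 1 + 1 :=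
          le_trans (Finset.card_insert_le _ _)
            (Nat.add_le_add_right (Finset.card_insert_le _ _) 1)
        omega
      obtain ⟨e', he'F, he'⟩ := Finset.not_subset.mp hfresh
      rw [Finset.mem_insert, Finset.mem_insert] at he'; push_neg at he'
      obtain ⟨hea, heb, heS⟩ := he'
      have h1' := h1 e' ((hF e').mp he'F)
        (by rw [Finset.mem_insert, Finset.mem_insert]; push_neg; exact ⟨hea, heb, heS⟩) 0
      rw [Finset.insert_comm a b] at h1'
      refine ih k (by omega) (insert b (insert a usedS))
        (Function.update (Function.update f a v) e' 0)
        (Function.update (Function.update g a (v + 1)) b w) e'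
        ?_ he'F ?_ ?_ (Function.update_self _ _ _) ?_ h1' h3
      · exact Finset.insert_subset hesF (Finset.insert_subset ((hF a).mpr haG) hsub)
      · rw [Finset.mem_insert, Finset.mem_insert]; push_neg
        exact ⟨heb, hea, heS⟩
      · rw [Finset.card_insert_of_notMem (by
            rw [Finset.mem_insert, Finset.mem_insert]; push_neg; exact ⟨heb, hea, heS⟩),
          Finset.card_insert_of_notMem (by
            rw [Finset.mem_insert]; push_neg
            exact ⟨hba, hbS⟩),
          Finset.card_insert_of_notMem haS]
        omega
      · -- invariant
        intro e he hge
        rcases Finset.mem_insert.mp he with rfl | he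
        · -- e = b = es
          have hneb : e ≠ e' := fun hcon => heb hcon.symm
          rw [Function.update_of_ne hneb,
            Function.update_of_ne (fun hcon => hae hcon.symm)]
          exact hfes
        rcases Finset.mem_insert.mp he with rfl | he
        · -- e = a
          rw [Function.update_of_ne hae, Function.update_self] at hge
          rw [Function.update_of_ne (fun hcon => hea hcon.symm), Function.update_self]
          exact zmod2_sub hge
        · -- e ∈ usedS
          have hne1 : e ≠ b := fun hcon => hes (hcon ▸ he)
          have hne2 : e ≠ a := fun hcon => haS (hcon ▸ he)
          have hne3 : e ≠ e' := fun hcon => heS (hcon ▸ he)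
          rw [Function.update_of_ne hne1, Function.update_of_ne hne2] at hge
          rw [Function.update_of_ne hne3, Function.update_of_ne hne2]
          exact hinv e he hge
    · -- the shadow strategy picked an ordinary edge; the real disconnector copies it.
      have h1' := h1 b hbG
        (by rw [Finset.mem_insert, Finset.mem_insert]; push_neg; exact ⟨hba, hbes, hbS⟩) 0
      have hseq : insert b (insert a (insert es usedS))
          = insert es (insert b (insert a usedS)) := by
        ext x
        simp only [Finset.mem_insert]
        tauto
      rw [hseq] at h1'
      refine ih k (by omega) (insert b (insert a usedS))
        (Function.update (Function.update f a v) b 0)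
        (Function.update (Function.update g a (v + 1)) b w) es
        ?_ hesF ?_ ?_ ?_ ?_ h1' h3
      · exact Finset.insert_subset ((hF b).mpr hbG)
          (Finset.insert_subset ((hF a).mpr haG) hsub)
      · rw [Finset.mem_insert, Finset.mem_insert]; push_neg
        exact ⟨fun hcon => hbes hcon.symm, fun hcon => hae hcon.symm, hes⟩
      · rw [Finset.card_insert_of_notMem (by
            rw [Finset.mem_insert, Finset.mem_insert]; push_neg
            exact ⟨fun hcon => hbes hcon.symm, fun hcon => hae hcon.symm, hes⟩),
          Finset.card_insert_of_notMem (by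
            rw [Finset.mem_insert]; push_neg; exact ⟨hba, hbS⟩),
          Finset.card_insert_of_notMem haS]
        omega
      · rw [Function.update_of_ne (fun hcon => hbes hcon.symm),
          Function.update_of_ne (fun hcon => hae hcon.symm)]
        exact hfes
      · -- invariant
        intro e he hge
        rcases Finset.mem_insert.mp he with rfl | he
        · -- e = b
          rw [Function.update_self]
        rcases Finset.mem_insert.mp he with rfl | he
        · -- e = a
          rw [Function.update_of_ne (fun hcon => hba hcon.symm),
            Function.update_self] at hge
          rw [Function.update_of_ne (fun hcon => hba hcon.symm), Function.update_self]
          exact zmod2_sub hge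
        · -- e ∈ usedS
          have hne1 : e ≠ b := fun hcon => hbS (hcon ▸ he)
          have hne2 : e ≠ a := fun hcon => haS (hcon ▸ he)
          rw [Function.update_of_ne hne1, Function.update_of_ne hne2] at hge
          rw [Function.update_of_ne hne1, Function.update_of_ne hne2]
          exact hinv e he hge

/-- If `G` is a finite connected simple graph and, in the link smoothing game on `G`,
the connecting player moving second has a winning strategy, then `G` contains two
edge-disjoint spanning trees. -/
theorem stmt_14 {V : Type} [Fintype V] [DecidableEq V] (G : SimpleGraph V)
    (hG : G.Connected) (h : ConnWins G G.edgeSet.ncard ∅ (fun _ => 0) false) :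
    ∃ T1 T2 : SimpleGraph V, T1.IsTree ∧ T1 ≤ G ∧ T2.IsTree ∧ T2 ≤ G ∧
      Disjoint T1.edgeSet T2.edgeSet := by
  classical
  have hfin : G.edgeSet.Finite := Set.toFinite _
  set F := hfin.toFinset with hFdef
  have hF : ∀ e, e ∈ F ↔ e ∈ G.edgeSet := fun e => hfin.mem_toFinset
  have hcardF : F.card = G.edgeSet.ncard := (Set.ncard_eq_toFinset_card _ hfin).symm
  cases hn : G.edgeSet.ncard with
  | zero =>
    rw [hn] at h
    simp only [ConnWins] at h
    obtain ⟨T, hT, hE⟩ := h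
    have hE' : T.edgeSet = ∅ := by
      rw [hE]; ext e
      simp only [Set.mem_setOf_eq, Set.mem_empty_iff_false, iff_false, not_and]
      intro _
      decide
    refine ⟨T, T, hT, ?_, hT, ?_, by rw [hE']; exact disjoint_bot_left⟩ <;>
      exact SimpleGraph.edgeSet_subset_edgeSet.mp (by rw [hE']; exact Set.empty_subset _)
  | succ k =>
    obtain ⟨e0, he0⟩ := Set.nonempty_of_ncard_ne_zero (s := G.edgeSet) (by omega)
    rw [hn] at h
    have h0 := h
    simp only [ConnWins] at h
    have hreal := h e0 he0 (Finset.notMem_empty e0) 0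
    obtain ⟨f', g', hdisj, ⟨T1, hT1, hE1⟩, ⟨T2, hT2, hE2⟩⟩ :=
      connwins_key G F hF k ∅ (Function.update (fun _ => 0) e0 0) (fun _ => 0) e0
        (Finset.empty_subset F) ((hF e0).mpr he0) (Finset.notMem_empty e0)
        (by rw [Finset.card_insert_of_notMem (Finset.notMem_empty e0),
              Finset.card_empty]; omega)
        (Function.update_self _ _ _)
        (fun e he => absurd he (Finset.notMem_empty e))
        hreal h0
    refine ⟨T1, T2, hT1, ?_, hT2, ?_, ?_⟩
    · exact SimpleGraph.edgeSet_subset_edgeSet.mp (by rw [hE1]; exact Set.sep_subset _ _)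
    · exact SimpleGraph.edgeSet_subset_edgeSet.mp (by rw [hE2]; exact Set.sep_subset _ _)
    · rw [Set.disjoint_left]
      intro e h1 h2
      rw [hE1] at h1
      rw [hE2] at h2
      have hcon := hdisj e h1.1 h2.2
      rw [h1.2] at hcon
      exact one_ne_zero hcon
end
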